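/- arXiv:2107.13211 — 5 statements merged into one kernel-verified Lean document; each statement's English description precedes it below -/
import Mathlib

section
/- Let ω ⊂ Ω be open and let φ^loc ∈ H¹₀(ω) solve the localized problem a_ω(φ^loc, v) = (g, v)_{L²(ω)} for all v ∈ H¹₀(ω), while φ ∈ H¹₀(Ω) solves the global problem a(φ, v) = (g, v)_{L²(ω)} for all v ∈ H¹₀(Ω), where g ∈ L²(ω). Then for all v ∈ H¹₀(Ω), a(φ − φ^loc, v) = (g, γ₀⁻¹γ₀ v)_{L²(ω)}, where γ₀ is the trace onto ∂ω restricted to restrictions of H¹₀(Ω)-functions and γ₀⁻¹ is the A-harmonic extension into ω. -/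
/-- `V` is `H¹₀(Ω)` with inner product `a`, `W = L²(ω)`, `R` the restriction to `ω`, `H0` the
functions of `H¹₀(ω)` extended by zero, and `E v = γ₀⁻¹γ₀ v`. The decomposition
`v|_ω = γ₀⁻¹γ₀ v + v₀` with `v₀ ∈ H¹₀(ω)` is `hdecomp`, whose second clause is the
`A`-harmonicity of `γ₀⁻¹γ₀ v` tested against `φloc`. -/
theorem statement6_general
    (V W : Type*)
    [NormedAddCommGroup V] [InnerProductSpace ℝ V]
    [NormedAddCommGroup W] [InnerProductSpace ℝ W]
    (H0 : Submodule ℝ V) (R E : V →ₗ[ℝ] W) (g : W) (φ φloc : V)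
    (hφ : ∀ v : V, (inner ℝ φ v : ℝ) = (inner ℝ g (R v) : ℝ))
    (hφloc : ∀ v ∈ H0, (inner ℝ φloc v : ℝ) = (inner ℝ g (R v) : ℝ))
    (hdecomp : ∀ v : V, ∃ v₀ ∈ H0,
      E v = R v - R v₀ ∧ (inner ℝ φloc (v - v₀) : ℝ) = 0) :
    ∀ v : V, (inner ℝ (φ - φloc) v : ℝ) = (inner ℝ g (E v) : ℝ) := by
  intro v
  obtain ⟨v₀, hv₀, hE, hharm⟩ := hdecomp v
  have hloc : (inner ℝ φloc v : ℝ) = inner ℝ φloc v₀ := by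
    rwa [inner_sub_right, sub_eq_zero] at hharm
  rw [inner_sub_left, hφ v, hloc, hφloc v₀ hv₀, hE, inner_sub_right]

/-- localization identity: with `V = (H¹₀(Ω), a)` an inner product space,
`W = L²(ω)`, `R : V → W` the restriction to `ω`, `H0 ⊂ V` the subspace of `H¹₀(ω)`
functions extended by zero, `E : V → W` the map `v ↦ γ₀⁻¹ γ₀ v` (the `A`-harmonic
extension of the trace of `v|_ω`).  The decomposition hypothesis encodes
`v|_ω = γ₀⁻¹γ₀v + v₀` with `v₀ ∈ H¹₀(ω)` and `a_ω(φ^loc, v − v₀) = 0` (`A`-harmonicity).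
If `φ` solves the global problem and `φ^loc ∈ H¹₀(ω)` solves the localized problem with
source `g ∈ L²(ω)`, then `a(φ − φ^loc, v) = (g, γ₀⁻¹γ₀ v)_{L²(ω)}` for all `v`. -/
theorem statement6
    (V W : Type*)
    [NormedAddCommGroup V] [InnerProductSpace ℝ V]
    [NormedAddCommGroup W] [InnerProductSpace ℝ W]
    (H0 : Submodule ℝ V) (R E : V →ₗ[ℝ] W) (g : W) (φ φloc : V)
    (hφ : ∀ v : V, (inner ℝ φ v : ℝ) = (inner ℝ g (R v) : ℝ))
    (hmem : φloc ∈ H0)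
    (hφloc : ∀ v ∈ H0, (inner ℝ φloc v : ℝ) = (inner ℝ g (R v) : ℝ))
    (hdecomp : ∀ v : V, ∃ v₀ ∈ H0,
      E v = R v - R v₀ ∧ (inner ℝ φloc (v - v₀) : ℝ) = 0) :
    ∀ v : V, (inner ℝ (φ - φloc) v : ℝ) = (inner ℝ g (E v) : ℝ) :=
  statement6_general V W H0 R E g φ φloc hφ hφloc hdecomp
end

section
/- With the notation of the localization identity, if g ∈ L²(ω) is L²-orthogonal to the space Y = γ₀⁻¹X of A-harmonic functions on ω (with zero boundary values on ∂Ω ∩ ∂ω), then the localized function φ^loc coincides with the global function φ, i.e., the basis function with source g is supported in ω. -/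
open scoped InnerProductSpace

section Localization

variable {𝕜 V W : Type*} [RCLike 𝕜]
  [NormedAddCommGroup V] [InnerProductSpace 𝕜 V]
  [NormedAddCommGroup W] [InnerProductSpace 𝕜 W]

/-- The localization identity `a(φ - φ^loc, v) = (g, γ₀⁻¹γ₀ v)`. -/
theorem inner_sub_loc_eq_inner_harmonicPart {H0 : Submodule 𝕜 V} {R E : V →ₗ[𝕜] W}
    {g : W} {φ φloc : V}
    (hφ : ∀ v : V, ⟪φ, v⟫_𝕜 = ⟪g, R v⟫_𝕜)
    (hφloc : ∀ v ∈ H0, ⟪φloc, v⟫_𝕜 = ⟪g, R v⟫_𝕜)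
    {v v₀ : V} (hv₀ : v₀ ∈ H0) (hE : E v = R v - R v₀) (hperp : ⟪φloc, v - v₀⟫_𝕜 = 0) :
    ⟪φ - φloc, v⟫_𝕜 = ⟪g, E v⟫_𝕜 := by
  have hloc : ⟪φloc, v⟫_𝕜 = ⟪g, R v₀⟫_𝕜 := by
    rw [← hφloc v₀ hv₀, ← sub_eq_zero, ← inner_sub_right, hperp]
  rw [inner_sub_left, hφ, hloc, hE, inner_sub_right]

end Localization

theorem statement7_general
    (V W : Type*)
    [NormedAddCommGroup V] [InnerProductSpace ℝ V]
    [NormedAddCommGroup W] [InnerProductSpace ℝ W]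
    (H0 : Submodule ℝ V) (R E : V →ₗ[ℝ] W) (Y : Submodule ℝ W)
    (g : W) (φ φloc : V)
    (hφ : ∀ v : V, (inner ℝ φ v : ℝ) = (inner ℝ g (R v) : ℝ))
    (hφloc : ∀ v ∈ H0, (inner ℝ φloc v : ℝ) = (inner ℝ g (R v) : ℝ))
    (hdecomp : ∀ v : V, ∃ v₀ ∈ H0,
      E v = R v - R v₀ ∧ (inner ℝ φloc (v - v₀) : ℝ) = 0)
    (hEY : ∀ v : V, E v ∈ Y)
    (horth : ∀ y ∈ Y, (inner ℝ g y : ℝ) = 0) :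
    φ = φloc := by
  refine sub_eq_zero.mp (ext_inner_right ℝ fun v => ?_)
  obtain ⟨v₀, hv₀, hE, hperp⟩ := hdecomp v
  rw [inner_sub_loc_eq_inner_harmonicPart hφ hφloc hv₀ hE hperp, horth _ (hEY v), inner_zero_left]

/-- if the source `g ∈ L²(ω)` is `L²`-orthogonal to the space
`Y = γ₀⁻¹ X` of `A`-harmonic functions on `ω`, then the localized solution `φ^loc`
coincides with the global solution `φ`, i.e. the basis function with source `g` is
supported in `ω`.  Setup as in the localization identity (Statement 6), with
`Y ⊂ W = L²(ω)` containing all the harmonic parts `E v = γ₀⁻¹γ₀ v`. -/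
theorem statement7
    (V W : Type*)
    [NormedAddCommGroup V] [InnerProductSpace ℝ V]
    [NormedAddCommGroup W] [InnerProductSpace ℝ W]
    (H0 : Submodule ℝ V) (R E : V →ₗ[ℝ] W) (Y : Submodule ℝ W)
    (g : W) (φ φloc : V)
    (hφ : ∀ v : V, (inner ℝ φ v : ℝ) = (inner ℝ g (R v) : ℝ))
    (hmem : φloc ∈ H0)
    (hφloc : ∀ v ∈ H0, (inner ℝ φloc v : ℝ) = (inner ℝ g (R v) : ℝ))
    (hdecomp : ∀ v : V, ∃ v₀ ∈ H0,
      E v = R v - R v₀ ∧ (inner ℝ φloc (v - v₀) : ℝ) = 0)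
    (hEY : ∀ v : V, E v ∈ Y)
    (horth : ∀ y ∈ Y, (inner ℝ g y : ℝ) = 0) :
    φ = φloc :=
  statement7_general V W H0 R E Y g φ φloc hφ hφloc hdecomp hEY horth
end

section
/- For A ≡ 1 in one dimension on a uniform mesh, the localized basis function obtained by solving −φ'' = g on a patch of 3 consecutive intervals with homogeneous Dirichlet boundary conditions, where g is the piecewise constant function orthogonal to affine functions on the patch (g taking values proportional to 1, −2, 1 on the three intervals), is (a scalar multiple of) the quadratic B-spline with knots at the four mesh points of the patch. -/
/-!
With `s = -c H²` the difference `φ - s B` is `C¹` on the open patch, its second derivative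
vanishes off the two interior knots (there `B'' = 1/H², -2/H², 1/H²` on the three cells, matching
`g / c`), and it vanishes at both ends of the patch; such a function is affine with zero boundary
values, hence zero. The `C¹` regularity of `B` across the knots comes from writing it with
truncated powers `(x - k)₊²`, each of which is `C¹`.
-/

open Set

section ConstantOffCountable

variable {E : Type*} [NormedAddCommGroup E] [NormedSpace ℝ E] [CompleteSpace E]

theorem eq_of_hasDerivAt_zero_off_countable {f : ℝ → E} {a b : ℝ} {s : Set ℝ} (hab : a ≤ b)
    (hs : s.Countable) (hf : ContinuousOn f (Icc a b))
    (hd : ∀ x ∈ Ioo a b \ s, HasDerivAt f 0 x) : f b = f a := by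
  have := MeasureTheory.integral_eq_of_hasDerivAt_off_countable_of_le f (fun _ => 0) hab hs hf hd
    (by simp)
  exact (sub_eq_zero.1 (by simpa using this.symm))

theorem eqOn_zero_of_hasDerivAt_hasDerivAt_zero_off_countable {f f' : ℝ → E} {a b : ℝ}
    {s : Set ℝ} (hab : a < b) (hs : s.Countable) (hf : ContinuousOn f (Icc a b))
    (hf' : ∀ x ∈ Ioo a b, HasDerivAt f (f' x) x) (hf'c : ContinuousOn f' (Ioo a b))
    (hf'' : ∀ x ∈ Ioo a b \ s, HasDerivAt f' 0 x) (ha : f a = 0) (hb : f b = 0) :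
    EqOn f 0 (Icc a b) := by
  have hslope_mono : ∀ x ∈ Ioo a b, ∀ y ∈ Ioo a b, x ≤ y → f' y = f' x := fun x hx y hy hxy =>
    eq_of_hasDerivAt_zero_off_countable hxy hs (hf'c.mono (Icc_subset_Ioo hx.1 hy.2))
      fun z hz => hf'' z ⟨⟨hx.1.trans hz.1.1, hz.1.2.trans hy.2⟩, hz.2⟩
  obtain ⟨m, hm⟩ := nonempty_Ioo.2 hab
  have hslope : ∀ x ∈ Ioo a b, f' x = f' m := fun x hx =>
    (le_total m x).elim (hslope_mono m hm x hx) fun h => (hslope_mono x hx m hm h).symm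
  have hconst : ∀ x ∈ Icc a b, f x - x • f' m = f a - a • f' m := by
    intro x hx
    have hcont : ContinuousOn (fun x => f x - x • f' m) (Icc a x) :=
      (hf.mono (Icc_subset_Icc_right hx.2)).sub (continuous_id.smul continuous_const).continuousOn
    refine eq_of_hasDerivAt_zero_off_countable (s := ∅) hx.1 countable_empty hcont fun y hy => ?_
    have hy' : y ∈ Ioo a b := ⟨hy.1.1, hy.1.2.trans_le hx.2⟩
    have := (hf' y hy').sub ((hasDerivAt_id' y).smul_const (f' m))
    rwa [hslope y hy', one_smul, sub_self] at this
  have hm0 : f' m = 0 := by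
    have := hconst b (right_mem_Icc.2 hab.le)
    rw [ha, hb, zero_sub, zero_sub, neg_inj, ← sub_eq_zero, ← sub_smul] at this
    exact (smul_eq_zero.1 this).resolve_left (sub_ne_zero.2 hab.ne')
  intro x hx
  simpa [ha, hm0] using hconst x hx

end ConstantOffCountable

theorem hasDerivAt_max_zero {t : ℝ} (ht : t ≠ 0) :
    HasDerivAt (fun t : ℝ => max t 0) (if 0 < t then 1 else 0) t := by
  rcases ht.lt_or_gt with ht | ht
  · rw [if_neg ht.not_gt]
    refine (hasDerivAt_const t 0).congr_of_eventuallyEq ?_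
    filter_upwards [Iio_mem_nhds ht] with u hu using max_eq_right hu.le
  · rw [if_pos ht]
    refine (hasDerivAt_id t).congr_of_eventuallyEq ?_
    filter_upwards [Ioi_mem_nhds ht] with u hu using max_eq_left hu.le

theorem hasDerivAt_max_zero_sq (t : ℝ) :
    HasDerivAt (fun t : ℝ => max t 0 ^ 2) (2 * max t 0) t := by
  rcases eq_or_ne t 0 with rfl | ht
  · have hleft : HasDerivWithinAt (fun t : ℝ => max t 0 ^ 2) 0 (Iic 0) 0 :=
      (hasDerivWithinAt_const 0 _ 0).congr (fun u hu => by simp [max_eq_right (mem_Iic.1 hu)])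
        (by simp)
    have hright : HasDerivWithinAt (fun t : ℝ => max t 0 ^ 2) 0 (Ici 0) 0 := by
      refine ((hasDerivAt_pow 2 (0 : ℝ)).hasDerivWithinAt.congr
        (fun u hu => by simp [max_eq_left (mem_Ici.1 hu)]) (by simp)).congr_deriv (by simp)
    simpa [Iic_union_Ici] using hleft.union hright
  · refine ((hasDerivAt_max_zero ht).pow 2).congr_deriv ?_
    split_ifs with h
    · ring
    · simp [max_eq_right (not_lt.1 h)]

/-- The coefficients `1, -3, 3, -1` make this the third finite difference, with step `H`, of the
truncated power `k ↦ (x - k)₊²`, divided by `2 H²`. -/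
noncomputable def quadraticBSpline (x0 H x : ℝ) : ℝ :=
  (max (x - x0) 0 ^ 2 - 3 * max (x - (x0 + H)) 0 ^ 2 + 3 * max (x - (x0 + 2 * H)) 0 ^ 2
    - max (x - (x0 + 3 * H)) 0 ^ 2) / (2 * H ^ 2)

noncomputable def quadraticBSplineSlope (x0 H x : ℝ) : ℝ :=
  (max (x - x0) 0 - 3 * max (x - (x0 + H)) 0 + 3 * max (x - (x0 + 2 * H)) 0
    - max (x - (x0 + 3 * H)) 0) / H ^ 2

theorem hasDerivAt_quadraticBSpline (x0 H x : ℝ) :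
    HasDerivAt (quadraticBSpline x0 H) (quadraticBSplineSlope x0 H x) x := by
  have h (k : ℝ) := (hasDerivAt_max_zero_sq (x - k)).comp_sub_const x k
  refine ((((h x0).sub ((h (x0 + H)).const_mul 3)).add ((h (x0 + 2 * H)).const_mul 3)).sub
    (h (x0 + 3 * H))).div_const (2 * H ^ 2) |>.congr_deriv ?_
  unfold quadraticBSplineSlope
  ring

theorem continuous_quadraticBSpline (x0 H : ℝ) : Continuous (quadraticBSpline x0 H) :=
  continuous_iff_continuousAt.2 fun x => (hasDerivAt_quadraticBSpline x0 H x).continuousAt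

theorem continuous_quadraticBSplineSlope (x0 H : ℝ) :
    Continuous (quadraticBSplineSlope x0 H) := by
  unfold quadraticBSplineSlope
  fun_prop

theorem hasDerivAt_quadraticBSplineSlope {x0 H x : ℝ} (hx : x ∈ Ioo x0 (x0 + 3 * H))
    (h1 : x ≠ x0 + H) (h2 : x ≠ x0 + 2 * H) :
    HasDerivAt (quadraticBSplineSlope x0 H)
      ((if x ≤ x0 + H then 1 else if x ≤ x0 + 2 * H then -2 else 1) / H ^ 2) x := by
  have h (k : ℝ) (hk : x ≠ k) := (hasDerivAt_max_zero (sub_ne_zero.2 hk)).comp_sub_const x k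
  refine ((((h x0 hx.1.ne').sub ((h (x0 + H) h1).const_mul 3)).add
    ((h (x0 + 2 * H) h2).const_mul 3)).sub (h (x0 + 3 * H) hx.2.ne)).div_const (H ^ 2)
    |>.congr_deriv ?_
  obtain ⟨hx0, hx3⟩ := hx
  split_ifs <;> linarith

theorem quadraticBSpline_eq_zero_of_le {x0 H x : ℝ} (hH : 0 ≤ H) (hx : x ≤ x0) :
    quadraticBSpline x0 H x = 0 := by
  simp [quadraticBSpline, hx, (show x ≤ x0 + H by linarith),
    (show x ≤ x0 + 2 * H by linarith), (show x ≤ x0 + 3 * H by linarith)]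

theorem quadraticBSpline_eq_zero_of_ge {x0 H x : ℝ} (hH : 0 ≤ H) (hx : x0 + 3 * H ≤ x) :
    quadraticBSpline x0 H x = 0 := by
  rw [quadraticBSpline, max_eq_left (by linarith), max_eq_left (by linarith),
    max_eq_left (by linarith), max_eq_left (by linarith)]
  ring

theorem quadraticBSpline_eq_of_mem_Icc {x0 H x : ℝ} (hH : 0 < H)
    (hx : x ∈ Icc x0 (x0 + 3 * H)) :
    quadraticBSpline x0 H x =
      if x ≤ x0 + H then ((x - x0) / H) ^ 2 / 2
      else if x ≤ x0 + 2 * H then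
        (-2 * ((x - x0) / H) ^ 2 + 6 * ((x - x0) / H) - 3) / 2
      else (3 - (x - x0) / H) ^ 2 / 2 := by
  obtain ⟨hx0, hx3⟩ := hx
  rw [quadraticBSpline, max_eq_left (a := x - x0) (by linarith),
    max_eq_right (a := x - (x0 + 3 * H)) (by linarith)]
  split_ifs with h1 h2
  · rw [max_eq_right (by linarith), max_eq_right (by linarith)]
    field_simp
    ring
  · rw [max_eq_left (by linarith), max_eq_right (by linarith)]
    field_simp
    ring
  · rw [max_eq_left (by linarith), max_eq_left (by linarith)]
    field_simp
    ring

/-- for `A ≡ 1` in 1d on a uniform mesh of size `H`, the localized basis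
function obtained by solving `−φ'' = g` on the patch `[x₀, x₀+3H]` of three consecutive
intervals with homogeneous Dirichlet boundary conditions, where the piecewise constant
source `g` takes values proportional to `1, −2, 1` on the three intervals (so that `g` is
`L²`-orthogonal to affine functions), is a scalar multiple of the quadratic B-spline `B`
with knots at the four mesh points of the patch. -/
theorem statement9
    (H x0 c : ℝ) (hH : 0 < H)
    (g B φ φ' : ℝ → ℝ)
    (hg : ∀ x, g x = if x ≤ x0 + H then c else if x ≤ x0 + 2 * H then -2 * c else c)
    (hB : ∀ x, B x =
      if x ≤ x0 + H then ((x - x0) / H) ^ 2 / 2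
      else if x ≤ x0 + 2 * H then
        (-2 * ((x - x0) / H) ^ 2 + 6 * ((x - x0) / H) - 3) / 2
      else (3 - (x - x0) / H) ^ 2 / 2)
    (hcont : ContinuousOn φ (Icc x0 (x0 + 3 * H)))
    (hd1 : ∀ x ∈ Ioo x0 (x0 + 3 * H), HasDerivAt φ (φ' x) x)
    (hd1cont : ContinuousOn φ' (Ioo x0 (x0 + 3 * H)))
    (hd2 : ∀ x ∈ Ioo x0 (x0 + 3 * H),
      x ≠ x0 + H → x ≠ x0 + 2 * H → HasDerivAt φ' (-(g x)) x)
    (hb0 : φ x0 = 0) (hb3 : φ (x0 + 3 * H) = 0) :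
    ∃ s : ℝ, ∀ x ∈ Icc x0 (x0 + 3 * H), φ x = s * B x := by
  set s := -c * H ^ 2
  have hsource : ∀ x, -g x - s * ((if x ≤ x0 + H then 1 else if x ≤ x0 + 2 * H then -2 else 1)
      / H ^ 2) = 0 := by
    intro x
    rw [hg x]
    split_ifs <;> field_simp <;> ring
  have hknots : ({x0 + H, x0 + 2 * H} : Set ℝ).Countable := (toFinite _).countable
  have hdefect := eqOn_zero_of_hasDerivAt_hasDerivAt_zero_off_countable
    (f := fun x => φ x - s * quadraticBSpline x0 H x)
    (f' := fun x => φ' x - s * quadraticBSplineSlope x0 H x) (by linarith) hknots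
    (hcont.sub ((continuous_quadraticBSpline x0 H).continuousOn.const_smul s))
    (fun x hx => (hd1 x hx).sub ((hasDerivAt_quadraticBSpline x0 H x).const_mul s))
    (hd1cont.sub ((continuous_quadraticBSplineSlope x0 H).continuousOn.const_smul s))
    (fun x ⟨hx, hk⟩ => by
      simp only [mem_insert_iff, mem_singleton_iff, not_or] at hk
      rw [← hsource x]
      exact (hd2 x hx hk.1 hk.2).sub ((hasDerivAt_quadraticBSplineSlope hx hk.1 hk.2).const_mul s))
    (by simp [hb0, quadraticBSpline_eq_zero_of_le hH.le le_rfl])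
    (by simp [hb3, quadraticBSpline_eq_zero_of_ge hH.le le_rfl])
  refine ⟨s, fun x hx => ?_⟩
  rw [hB x, ← quadraticBSpline_eq_of_mem_Icc hH hx, ← sub_eq_zero]
  exact hdefect hx
end

section
/- Assume the Steklov eigenfunctions on each patch satisfy the interior decay bound ‖ψ_k‖_{L²(N^{⌊ℓ/2⌋}(T))} ≤ C_sd(H,ℓ) exp(−C k^{1/(d-1)}) and the number of elements in each patch of order ℓ scales like ℓ^d. Then the localization quantity satisfies σ(H,ℓ) ≤ C′ C_sd(H,ℓ) ℓ^{d − d/(d-1)} H_min^{−1/2} exp(−C ℓ^{d/(d-1)}), i.e., the localization error decays super-exponentially in ℓ. -/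
/-!
Expand `v ∈ Y` in the Steklov eigenfunctions: `(g, v) = ∑ₖ (v, ψₖ)_{Γ₁} (g, ψₖ)`. The first `N`
terms vanish by the orthogonality of `g`, the coefficients are bounded by the trace inequality,
and the remaining factors decay like `exp (-C k^α)` with `α = 1/(d-1)`. Splitting this as
`exp (-C N^α / 2) · exp (-C k^α / 2)` leaves a convergent series times `exp (-C N^α / 2)`, and
`N ≳ ℓ^d` turns `N^α` into `ℓ^{d/(d-1)}`.
-/

open Real Filter Asymptotics
open scoped RealInnerProductSpace

lemma summable_exp_neg_mul_rpow {a α : ℝ} (ha : 0 < a) (hα : 0 < α) :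
    Summable fun k : ℕ => exp (-a * (k : ℝ) ^ α) := by
  have hpow : Tendsto (fun k : ℕ => (k : ℝ) ^ α) atTop atTop :=
    (tendsto_rpow_atTop hα).comp tendsto_natCast_atTop_atTop
  have hO := ((isLittleO_exp_neg_mul_rpow_atTop ha (-2 / α)).comp_tendsto hpow).isBigO
  refine summable_of_isBigO_nat (Real.summable_nat_rpow.mpr (by norm_num : (-2 : ℝ) < -1)) ?_
  refine hO.congr_right fun k => ?_
  rw [Function.comp_apply, ← rpow_mul (Nat.cast_nonneg _), mul_div_cancel₀ _ hα.ne']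

lemma exp_neg_mul_rpow_le_mul {a α x y : ℝ} (ha : 0 ≤ a) (hα : 0 ≤ α) (hx : 0 ≤ x)
    (hxy : x ≤ y) :
    exp (-a * y ^ α) ≤ exp (-(a / 2) * x ^ α) * exp (-(a / 2) * y ^ α) := by
  rw [← exp_add, exp_le_exp]
  nlinarith [rpow_le_rpow hx hxy hα]

lemma HasSum.le_of_head_eq_zero_of_stretchedExp_tail {f : ℕ → ℝ} {s K a α : ℝ} {N : ℕ}
    (hf : HasSum f s) (ha : 0 < a) (hα : 0 < α) (hK : 0 ≤ K) (hhead : ∀ k < N, f k = 0)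
    (htail : ∀ k, N ≤ k → f k ≤ K * Real.exp (-a * (k : ℝ) ^ α)) :
    s ≤ K * Real.exp (-(a / 2) * (N : ℝ) ^ α) * ∑' k : ℕ, Real.exp (-(a / 2) * (k : ℝ) ^ α) := by
  rw [← hf.tsum_eq, ← tsum_mul_left]
  refine hf.summable.tsum_le_tsum (fun k => ?_)
    ((summable_exp_neg_mul_rpow (half_pos ha) hα).mul_left _)
  rcases lt_or_ge k N with hk | hk
  · rw [hhead k hk]
    positivity
  · calc f k ≤ K * Real.exp (-a * (k : ℝ) ^ α) := htail k hk
      _ ≤ K * (Real.exp (-(a / 2) * (N : ℝ) ^ α) * Real.exp (-(a / 2) * (k : ℝ) ^ α)) := by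
        gcongr
        exact exp_neg_mul_rpow_le_mul ha.le hα.le (Nat.cast_nonneg N) (by exact_mod_cast hk)
      _ = _ := by ring

lemma mul_rpow_le_of_mul_pow_le {c x y e : ℝ} {n : ℕ} (hc : 0 ≤ c) (hx : 0 ≤ x) (he : 0 ≤ e)
    (h : c * x ^ n ≤ y) : c ^ e * x ^ (n * e) ≤ y ^ e := by
  rw [rpow_mul hx, rpow_natCast, ← mul_rpow hc (by positivity)]
  exact rpow_le_rpow (by positivity) h he

section SteklovExpansion

variable {V Hb Hw : Type*} [NormedAddCommGroup V] [InnerProductSpace ℝ V]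
  [NormedAddCommGroup Hb] [InnerProductSpace ℝ Hb] [NormedAddCommGroup Hw] [InnerProductSpace ℝ Hw]
  {ψ : ℕ → V} {Tb : V →L[ℝ] Hb} {Tw : V →L[ℝ] Hw}

lemma HasSum.mul_inner_map {c : ℕ → ℝ} {v : V} (hv : HasSum (fun k => c k • ψ k) v)
    (T : V →L[ℝ] Hw) (g : Hw) : HasSum (fun k => c k * ⟪g, T (ψ k)⟫) ⟪g, T v⟫ := by
  simpa only [ContinuousLinearMap.coe_comp, Function.comp_apply, map_smul,
    innerSL_apply_apply, real_inner_smul_right, smul_eq_mul] using hv.mapL ((innerSL ℝ g).comp T)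

theorem inner_le_of_steklov_decay {g : Hw} {v : V} {N : ℕ} {M Csd a α : ℝ}
    (ha : 0 < a) (hα : 0 < α) (hCsd : 0 ≤ Csd) (horth : Orthonormal ℝ (Tb ∘ ψ))
    (hv : HasSum (fun k => ⟪Tb v, Tb (ψ k)⟫ • ψ k) v)
    (hdec : ∀ k : ℕ, ‖Tw (ψ k)‖ ≤ Csd * exp (-a * (k : ℝ) ^ α))
    (hg : ‖g‖ ≤ 1) (hgN : ∀ k < N, ⟪g, Tw (ψ k)⟫ = 0) (hM : ‖Tb v‖ ≤ M) :
    ⟪g, Tw v⟫ ≤ M * Csd * exp (-(a / 2) * (N : ℝ) ^ α) *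
      ∑' k : ℕ, exp (-(a / 2) * (k : ℝ) ^ α) := by
  have hM0 : 0 ≤ M := (norm_nonneg _).trans hM
  refine (hv.mul_inner_map Tw g).le_of_head_eq_zero_of_stretchedExp_tail ha hα (by positivity)
    (fun k hk => by rw [hgN k hk, mul_zero]) fun k _ => ?_
  have hcoef : |⟪Tb v, Tb (ψ k)⟫| ≤ M := by
    have hψ : ‖Tb (ψ k)‖ = 1 := horth.1 k
    simpa [hψ] using (abs_real_inner_le_norm (Tb v) (Tb (ψ k))).trans
      (mul_le_mul_of_nonneg_right hM (norm_nonneg _))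
  have hsrc : |⟪g, Tw (ψ k)⟫| ≤ Csd * exp (-a * (k : ℝ) ^ α) :=
    (abs_real_inner_le_norm g _).trans
      (by simpa using mul_le_mul hg (hdec k) (norm_nonneg _) zero_le_one)
  calc ⟪Tb v, Tb (ψ k)⟫ * ⟪g, Tw (ψ k)⟫
      ≤ |⟪Tb v, Tb (ψ k)⟫| * |⟪g, Tw (ψ k)⟫| := by rw [← abs_mul]; exact le_abs_self _
    _ ≤ M * (Csd * exp (-a * (k : ℝ) ^ α)) := mul_le_mul hcoef hsrc (abs_nonneg _) hM0
    _ = M * Csd * exp (-a * (k : ℝ) ^ α) := by ring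

end SteklovExpansion

theorem statement14_general
    (d : ℕ) (hd : 2 ≤ d) (Cdec c₀ c₁ Ctr : ℝ)
    (hCdec : 0 < Cdec) (hc₀ : 0 < c₀) (hCtr : 0 < Ctr) :
    ∃ C C' : ℝ, 0 < C ∧ 0 < C' ∧
      ∀ (V Hb Hw : Type)
        [NormedAddCommGroup V] [InnerProductSpace ℝ V]
        [NormedAddCommGroup Hb] [InnerProductSpace ℝ Hb]
        [NormedAddCommGroup Hw] [InnerProductSpace ℝ Hw]
        (ψ : ℕ → V) (Tb : V →L[ℝ] Hb) (Tw : V →L[ℝ] Hw)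
        (Y : Submodule ℝ V) (g : Hw) (ℓ N : ℕ) (Hmin Csd : ℝ),
        0 < Hmin → 0 ≤ Csd → 1 ≤ ℓ →
        -- number of elements in the patch scales like ℓ^d
        c₀ * (ℓ : ℝ) ^ d ≤ (N : ℝ) → (N : ℝ) ≤ c₁ * (ℓ : ℝ) ^ d →
        -- L²(Γ₁)-orthonormality of the Steklov eigenfunctions
        (∀ j k : ℕ,
          (inner ℝ (Tb (ψ j)) (Tb (ψ k)) : ℝ) = if j = k then 1 else 0) →
        -- completeness: every v ∈ Y expands in the Steklov eigenfunctions
        (∀ v ∈ Y, HasSum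
          (fun k : ℕ => (inner ℝ (Tb v) (Tb (ψ k)) : ℝ) • ψ k) v) →
        -- interior decay of the Steklov eigenfunctions (Assumption on decay)
        (∀ k : ℕ, ‖Tw (ψ k)‖ ≤
          Csd * Real.exp (-Cdec * (k : ℝ) ^ (1 / ((d : ℝ) - 1)))) →
        -- normalized source, orthogonal to the first N eigenfunctions
        ‖g‖ ≤ 1 →
        (∀ k < N, (inner ℝ g (Tw (ψ k)) : ℝ) = 0) →
        -- trace inequality
        (∀ v ∈ Y, ‖Tb v‖ ≤ Ctr * Hmin ^ (-(1 / 2 : ℝ)) * ‖v‖) →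
        -- conclusion: super-exponential bound on the localization quantity σ
        ∀ v ∈ Y, ‖v‖ = 1 →
          (inner ℝ g (Tw v) : ℝ) ≤
            C' * Csd * (ℓ : ℝ) ^ ((d : ℝ) - (d : ℝ) / ((d : ℝ) - 1)) *
              Hmin ^ (-(1 / 2 : ℝ)) *
                Real.exp (-C * (ℓ : ℝ) ^ ((d : ℝ) / ((d : ℝ) - 1))) := by
  have hd1 : (1 : ℝ) ≤ d - 1 := by
    have : (2 : ℝ) ≤ d := by exact_mod_cast hd
    linarith
  set α : ℝ := 1 / ((d : ℝ) - 1)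
  have hα : 0 < α := by positivity
  have hdα : (d : ℝ) / ((d : ℝ) - 1) = d * α := (mul_one_div _ _).symm
  set S : ℝ := ∑' k : ℕ, Real.exp (-(Cdec / 2) * (k : ℝ) ^ α)
  have hS : 0 < S :=
    (summable_exp_neg_mul_rpow (half_pos hCdec) hα).tsum_pos (fun _ => (exp_pos _).le) 0
      (exp_pos _)
  refine ⟨Cdec / 2 * c₀ ^ α, Ctr * S, by positivity, by positivity, ?_⟩
  intro V Hb Hw _ _ _ _ _ _ ψ Tb Tw Y g ℓ N Hmin Csd _ hCsd hℓ hN₀ _ horth hcomp hdec hg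
    hgN htr v hv hv1
  have hM : ‖Tb v‖ ≤ Ctr * Hmin ^ (-(1 / 2 : ℝ)) := by simpa [hv1] using htr v hv
  have hσ := inner_le_of_steklov_decay hCdec hα hCsd (orthonormal_iff_ite.mpr horth)
    (hcomp v hv) hdec hg hgN hM
  have hNℓ : c₀ ^ α * (ℓ : ℝ) ^ ((d : ℝ) / ((d : ℝ) - 1)) ≤ (N : ℝ) ^ α := by
    rw [hdα]
    exact mul_rpow_le_of_mul_pow_le hc₀.le (Nat.cast_nonneg ℓ) hα.le hN₀
  have hℓpow : 1 ≤ (ℓ : ℝ) ^ ((d : ℝ) - (d : ℝ) / ((d : ℝ) - 1)) :=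
    one_le_rpow (by exact_mod_cast hℓ) (sub_nonneg.mpr (div_le_self (by linarith) hd1))
  calc ⟪g, Tw v⟫
      ≤ Ctr * Hmin ^ (-(1 / 2 : ℝ)) * Csd * Real.exp (-(Cdec / 2) * (N : ℝ) ^ α) * S := hσ
    _ ≤ Ctr * Hmin ^ (-(1 / 2 : ℝ)) * Csd * ((ℓ : ℝ) ^ ((d : ℝ) - (d : ℝ) / ((d : ℝ) - 1)) *
          Real.exp (-(Cdec / 2 * c₀ ^ α) * (ℓ : ℝ) ^ ((d : ℝ) / ((d : ℝ) - 1)))) * S := by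
      gcongr
      exact (exp_le_exp.mpr (by nlinarith)).trans (le_mul_of_one_le_left (exp_pos _).le hℓpow)
    _ = _ := by ring

/-- super-exponential localization: assume the Steklov eigenfunctions
`ψ_k` on each patch `ω = N^ℓ(T)` decay in the interior like
`‖ψ_k‖_{L²(N^{⌊ℓ/2⌋}(T))} ≤ C_sd exp(−C_dec k^{1/(d-1)})`, that the number `N` of
elements in the (inner) patch scales like `ℓ^d` (i.e. `c₀ℓ^d ≤ N ≤ c₁ℓ^d`), and that a
trace inequality `‖v‖_{L²(Γ₁)} ≤ C_tr H_min^{-1/2}‖v‖_{H¹(ω)}` holds on the harmonic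
space `Y`.  Then there are constants `C, C' > 0` independent of `H, ℓ` (and of the patch
data) such that the localization quantity satisfies
`σ ≤ C' C_sd ℓ^{d−d/(d-1)} H_min^{-1/2} exp(−C ℓ^{d/(d-1)})`, i.e. the localization
error decays super-exponentially in `ℓ`.  Here `σ` is realized as the supremum of
`(g, v)_{L²(ω̂)}` over normalized `v ∈ Y`, where `g` is a normalized piecewise constant
source `L²`-orthogonal to the first `N` Steklov eigenfunctions, and the
`L²(Γ₁)`-orthonormal Steklov system `{ψ_k}` is complete in `Y`. -/
theorem statement14
    (d : ℕ) (hd : 2 ≤ d) (Cdec c₀ c₁ Ctr : ℝ)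
    (hCdec : 0 < Cdec) (hc₀ : 0 < c₀) (hc₁ : 0 < c₁) (hCtr : 0 < Ctr) :
    ∃ C C' : ℝ, 0 < C ∧ 0 < C' ∧
      ∀ (V Hb Hw : Type)
        [NormedAddCommGroup V] [InnerProductSpace ℝ V]
        [NormedAddCommGroup Hb] [InnerProductSpace ℝ Hb]
        [NormedAddCommGroup Hw] [InnerProductSpace ℝ Hw]
        (ψ : ℕ → V) (Tb : V →L[ℝ] Hb) (Tw : V →L[ℝ] Hw)
        (Y : Submodule ℝ V) (g : Hw) (ℓ N : ℕ) (Hmin Csd : ℝ),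
        0 < Hmin → 0 ≤ Csd → 1 ≤ ℓ →
        -- number of elements in the patch scales like ℓ^d
        c₀ * (ℓ : ℝ) ^ d ≤ (N : ℝ) → (N : ℝ) ≤ c₁ * (ℓ : ℝ) ^ d →
        -- L²(Γ₁)-orthonormality of the Steklov eigenfunctions
        (∀ j k : ℕ,
          (inner ℝ (Tb (ψ j)) (Tb (ψ k)) : ℝ) = if j = k then 1 else 0) →
        -- completeness: every v ∈ Y expands in the Steklov eigenfunctions
        (∀ v ∈ Y, HasSum
          (fun k : ℕ => (inner ℝ (Tb v) (Tb (ψ k)) : ℝ) • ψ k) v) →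
        -- interior decay of the Steklov eigenfunctions (Assumption on decay)
        (∀ k : ℕ, ‖Tw (ψ k)‖ ≤
          Csd * Real.exp (-Cdec * (k : ℝ) ^ (1 / ((d : ℝ) - 1)))) →
        -- normalized source, orthogonal to the first N eigenfunctions
        ‖g‖ ≤ 1 →
        (∀ k < N, (inner ℝ g (Tw (ψ k)) : ℝ) = 0) →
        -- trace inequality
        (∀ v ∈ Y, ‖Tb v‖ ≤ Ctr * Hmin ^ (-(1 / 2 : ℝ)) * ‖v‖) →
        -- conclusion: super-exponential bound on the localization quantity σ
        ∀ v ∈ Y, ‖v‖ = 1 →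
          (inner ℝ g (Tw v) : ℝ) ≤
            C' * Csd * (ℓ : ℝ) ^ ((d : ℝ) - (d : ℝ) / ((d : ℝ) - 1)) *
              Hmin ^ (-(1 / 2 : ℝ)) *
                Real.exp (-C * (ℓ : ℝ) ^ ((d : ℝ) / ((d : ℝ) - 1))) :=
  statement14_general d hd Cdec c₀ c₁ Ctr hCdec hc₀ hCtr
end

section
/- With 𝒮 = ℬ𝒜⁻¹ℬᵀ the Schur complement as above, the LOD basis function φ^loc = (1 − 𝒞^loc)b_T satisfies 𝒜φ^loc = ℬᵀ𝒮⁻¹𝟙_T; in particular, the distributional source g := −div(A∇φ^loc) = 𝒮⁻¹𝟙_T is a piecewise constant function in P⁰(𝒯_{H,ω}) ⊂ L²(ω). -/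
/-! Both `φloc` and `G λ` are orthogonal to `ker ℬ` and have the same image `𝟙_T` under `ℬ`;
since `ℬ` is injective on `(ker ℬ)ᗮ`, they coincide, and the identity is the defining
property of `G`. -/

open LinearMap Submodule

section

variable {𝕜 V : Type*} [RCLike 𝕜] [NormedAddCommGroup V] [InnerProductSpace 𝕜 V]

theorem eq_of_mem_orthogonal_ker_of_map_eq {F : Type*} [AddCommGroup F] [Module 𝕜 F]
    {B : V →ₗ[𝕜] F} {u w : V} (hu : u ∈ (ker B)ᗮ) (hw : w ∈ (ker B)ᗮ) (h : B u = B w) :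
    u = w := by
  have hd : u - w ∈ ker B ⊓ (ker B)ᗮ := ⟨by simp [h], sub_mem hu hw⟩
  rw [inf_orthogonal_eq_bot, mem_bot] at hd
  exact sub_eq_zero.mp hd

theorem mem_orthogonal_ker_of_inner_eq {F : Type*} [NormedAddCommGroup F] [InnerProductSpace 𝕜 F]
    {B : V →ₗ[𝕜] F} {g : V} {p : F} (hg : ∀ v, inner 𝕜 g v = inner 𝕜 p (B v)) :
    g ∈ (ker B)ᗮ :=
  (mem_orthogonal' _ _).2 fun v hv ↦ by rw [hg, mem_ker.1 hv, inner_zero_right]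

end

/-- with `𝒮 = ℬ𝒜⁻¹ℬᵀ` the Schur complement (notation as in Statement 17,
with `G = 𝒜⁻¹ℬᵀ` characterized by `a_ω(Gp, v) = (p, ℬv)`), the LOD basis function
`φ^loc = (1 − 𝒞^loc) b_T` — characterized as the energy-minimizer subject to
`ℬ φ^loc = 𝟙_T`, i.e. `ℬφ^loc = 𝟙_T` and `a_ω(φ^loc, w) = 0` for all `w ∈ ker ℬ` —
satisfies `𝒜 φ^loc = ℬᵀ 𝒮⁻¹ 𝟙_T`: writing `λ = 𝒮⁻¹𝟙_T` (i.e. `𝒮λ = ℬ(Gλ) = 𝟙_T`),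
we have `a_ω(φ^loc, v) = (λ, ℬv)_{L²}` for all `v`; in particular the distributional
source `g = −div(A∇φ^loc) = 𝒮⁻¹𝟙_T = λ` is a piecewise constant function in
`P⁰(𝒯_{H,ω}) ⊂ L²(ω)`. -/
theorem statement18
    (V F : Type*)
    [NormedAddCommGroup V] [InnerProductSpace ℝ V]
    [NormedAddCommGroup F] [InnerProductSpace ℝ F]
    (B : V →L[ℝ] F) (G : F →ₗ[ℝ] V)
    (hG : ∀ (p : F) (v : V), (inner ℝ (G p) v : ℝ) = (inner ℝ p (B v) : ℝ))
    (oneT lam : F) (φloc : V)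
    (hBφ : B φloc = oneT)
    (horth : ∀ w : V, B w = 0 → (inner ℝ φloc w : ℝ) = 0)
    (hlam : B (G lam) = oneT) :
    ∀ v : V, (inner ℝ φloc v : ℝ) = (inner ℝ lam (B v) : ℝ) := by
  have hφ : φloc = G lam :=
    eq_of_mem_orthogonal_ker_of_map_eq (B := B.toLinearMap)
      ((mem_orthogonal' _ _).2 horth) (mem_orthogonal_ker_of_inner_eq (hG lam))
      (hBφ.trans hlam.symm)
  intro v
  rw [hφ, hG]
end
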